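/- arXiv:1402.3346 — 4 statements merged into one kernel-verified Lean document; each statement's English description precedes it below -/
import Mathlib

section
/- For any center z ∈ {0,1}^k and any strictly positive vector (q_x)_{x ∈ B} indexed by the radius-1 Hamming ball B around z, there exists a strictly positive product distribution s on {0,1}^k (i.e., s(x) = ∏_{i=1}^k s_i(x_i) with each s_i a strictly positive distribution on {0,1}) such that the restriction of s to B is proportional to (q_x)_{x ∈ B}. -/
/-!
Normalise the coordinate weights `w i b = q (update z i b) / q z` to probabilities. Every weight
at the centre is `1`, and a point of the ball differs from `z` in at most one coordinate, so the
product of the weights at such a point `x` is `q x / q z`; normalisation only rescales by a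
constant.
-/

open Finset Function

section Hamming

variable {ι : Type*} [Fintype ι] [DecidableEq ι] {β : ι → Type*} [∀ i, DecidableEq (β i)]

theorem hammingDist_update_le_one (z : ∀ i, β i) (i : ι) (b : β i) :
    hammingDist (update z i b) z ≤ 1 := by
  calc hammingDist (update z i b) z
      ≤ #({i} : Finset ι) := card_le_card fun j hj => by
        by_contra hji
        exact (mem_filter.mp hj).2 (update_of_ne (mem_singleton.not.mp hji) b z)
    _ = 1 := card_singleton i

theorem eq_update_of_hammingDist_le_one {x z : ∀ i, β i} (hx : hammingDist x z ≤ 1) {i : ι}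
    (hi : x i ≠ z i) : x = update z i (x i) := by
  funext j
  by_cases hji : j = i
  · subst hji
    simp
  · rw [update_of_ne hji]
    by_contra hj
    have : #({i, j} : Finset ι) ≤ hammingDist x z :=
      card_le_card fun l hl => by
        rcases mem_insert.mp hl with rfl | hl
        · exact mem_filter.mpr ⟨mem_univ _, hi⟩
        · exact mem_filter.mpr ⟨mem_univ _, (mem_singleton.mp hl) ▸ hj⟩
    rw [card_pair (Ne.symm hji)] at this
    omega

theorem prod_apply_update_of_hammingDist_le_one {M : Type*} [CommMonoid M]
    {F : (∀ i, β i) → M} {x z : ∀ i, β i} (hFz : F z = 1) (hx : hammingDist x z ≤ 1) :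
    ∏ i, F (update z i (x i)) = F x := by
  by_cases hxz : x = z
  · subst hxz
    simp [hFz]
  obtain ⟨j, hj⟩ := not_forall.mp (mt funext hxz)
  have hx_eq := eq_update_of_hammingDist_le_one hx hj
  rw [prod_eq_single j (fun i _ hij => ?_) (by simp), ← hx_eq]
  rw [hx_eq, update_of_ne hij, update_eq_self, hFz]

end Hamming

/-- For any center `z ∈ {0,1}^k` and any strictly positive vector `q` indexed by the radius-1
Hamming ball around `z`, there is a strictly positive product distribution `s` on `{0,1}^k`
whose restriction to the ball is proportional to `q`. -/
theorem product_dist_on_hamming_ball (k : ℕ) (z : Fin k → Bool)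
    (q : (Fin k → Bool) → ℝ) (hq : ∀ x, hammingDist x z ≤ 1 → 0 < q x) :
    ∃ s : Fin k → Bool → ℝ,
      (∀ i b, 0 < s i b) ∧ (∀ i, s i false + s i true = 1) ∧
      ∃ c : ℝ, 0 < c ∧ ∀ x, hammingDist x z ≤ 1 → (∏ i, s i (x i)) = c * q x := by
  have hqz : 0 < q z := hq z (by simp)
  set w : Fin k → Bool → ℝ := fun i b => q (update z i b) / q z
  have hw : ∀ i b, 0 < w i b := fun i b => div_pos (hq _ (hammingDist_update_le_one z i b)) hqz
  have hN : ∀ i, 0 < w i false + w i true := fun i => add_pos (hw i false) (hw i true)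
  refine ⟨fun i b => w i b / (w i false + w i true), fun i b => div_pos (hw i b) (hN i),
    fun i => (add_div _ _ _).symm.trans (div_self (hN i).ne'),
    (q z * ∏ i, (w i false + w i true))⁻¹, inv_pos.mpr (mul_pos hqz (prod_pos fun i _ => hN i)),
    fun x hx => ?_⟩
  have hprod : ∏ i, w i (x i) = q x / q z :=
    prod_apply_update_of_hammingDist_le_one (F := fun y => q y / q z) (div_self hqz.ne') hx
  rw [prod_div_distrib, hprod]
  field_simp
end

section
/- Let q be a probability distribution on {0,1}^n and let σ: {0,1}^n → {0,...,2^n−1} be a bijection. Define weights λ_{ỹ} := 1 − q(ỹ)/(1 − ∑_{ỹ': σ(ỹ')>σ(ỹ)} q(ỹ')) for ỹ with the denominator nonzero, and λ_{ỹ} := 0 when σ(ỹ) = 0 or the denominator vanishes. Then λ_{ỹ} ∈ [0,1] for all ỹ, and q(y) = ∑_{ỹ} (∏_{ỹ': σ(ỹ')>σ(ỹ)} λ_{ỹ'}) (1 − λ_{ỹ}) δ_{ỹ}(y) for all y ∈ {0,1}^n, where δ_{ỹ} is the Dirac measure at ỹ. -/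
/-!
Write `S y` for the mass that `q` puts strictly above `y` in the order `σ`, so that the
denominator `1 - S y` is the mass at or below `y`. Every weight satisfies
`λ_y (1 - S y) = 1 - S y - q y`: off the degenerate cases this is the definition, when
`1 - S y = 0` both sides vanish because `0 ≤ q y ≤ 1 - S y`, and when `σ y = 0` the element `y`
is the bottom of the order, so `q y = 1 - S y`. Adding the elements above `y` one at a time,
from the top down, this identity telescopes to `∏_{σ y < σ y'} λ_{y'} = 1 - S y`, and one more
application of it gives `(1 - S y)(1 - λ_y) = q y`.
-/

open Finset

section

variable {α β : Type*} [Fintype α] [LinearOrder β] {σ : α → β} {q : α → ℝ}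

def massAbove (σ : α → β) (q : α → ℝ) (y : α) : ℝ :=
  ∑ y' ∈ univ.filter (fun y' => σ y < σ y'), q y'

theorem one_sub_massAbove (hq1 : ∑ y, q y = 1) (y : α) :
    1 - massAbove σ q y = ∑ y' ∈ univ.filter (fun y' => σ y' ≤ σ y), q y' := by
  rw [← hq1, ← sum_filter_add_sum_filter_not univ (fun y' => σ y < σ y'), massAbove]
  simp only [not_lt, add_sub_cancel_left]

theorem le_one_sub_massAbove (hq0 : ∀ y, 0 ≤ q y) (hq1 : ∑ y, q y = 1) (y : α) :
    q y ≤ 1 - massAbove σ q y := by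
  rw [one_sub_massAbove hq1]
  exact single_le_sum (fun y' _ => hq0 y') (by simp)

theorem one_sub_massAbove_of_forall_le (hσ : Function.Injective σ) (hq1 : ∑ y, q y = 1)
    {y : α} (hy : ∀ y', σ y ≤ σ y') : 1 - massAbove σ q y = q y := by
  have hbelow : univ.filter (fun y' => σ y' ≤ σ y) = {y} := by
    ext y'
    simpa using ⟨fun h => hσ (le_antisymm h (hy y')), fun h => h ▸ le_rfl⟩
  rw [one_sub_massAbove hq1, hbelow, sum_singleton]

theorem prod_eq_one_sub_sum_of_upperSet (hσ : Function.Injective σ) {lam : α → ℝ}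
    (hlam : ∀ a, lam a * (1 - massAbove σ q a) = 1 - massAbove σ q a - q a)
    (s : Finset α) (hs : ∀ a ∈ s, ∀ b, σ a < σ b → b ∈ s) :
    ∏ a ∈ s, lam a = 1 - ∑ a ∈ s, q a := by
  classical
  induction s using Finset.induction_on_min_value σ with
  | empty => simp
  | insert a s ha hmin ih =>
    have habove : univ.filter (fun b => σ a < σ b) = s := by
      ext b
      simp only [mem_filter, mem_univ, true_and]
      refine ⟨fun h => ?_, fun hb => (hmin b hb).lt_of_ne fun h => ha (hσ h ▸ hb)⟩
      exact (mem_insert.mp (hs a (mem_insert_self a s) b h)).resolve_left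
        (by rintro rfl; exact lt_irrefl _ h)
    have hs' : ∀ b ∈ s, ∀ c, σ b < σ c → c ∈ s := fun b hb c hbc =>
      (mem_insert.mp (hs b (mem_insert_of_mem hb) c hbc)).resolve_left
        (by rintro rfl; exact (hmin b hb).not_gt hbc)
    have hstep := hlam a
    rw [massAbove, habove] at hstep
    rw [prod_insert ha, sum_insert ha, ih hs', hstep]
    ring

end

section

variable {α : Type*} [Fintype α] {σ : α → ℕ} {q : α → ℝ}

noncomputable def sharingWeight (σ : α → ℕ) (q : α → ℝ) (y : α) : ℝ :=
  if σ y = 0 ∨ 1 - massAbove σ q y = 0 then 0 else 1 - q y / (1 - massAbove σ q y)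

theorem sharingWeight_mem_Icc (hq0 : ∀ y, 0 ≤ q y) (hq1 : ∑ y, q y = 1) (y : α) :
    sharingWeight σ q y ∈ Set.Icc 0 1 := by
  unfold sharingWeight
  split_ifs with h
  · simp
  · have hle := le_one_sub_massAbove (σ := σ) hq0 hq1 y
    have hpos : 0 < 1 - massAbove σ q y :=
      lt_of_le_of_ne ((hq0 y).trans hle) (Ne.symm (not_or.mp h).2)
    exact ⟨sub_nonneg.mpr ((div_le_one hpos).mpr hle),
      sub_le_self _ (div_nonneg (hq0 y) hpos.le)⟩

theorem sharingWeight_mul_one_sub_massAbove (hq0 : ∀ y, 0 ≤ q y) (hq1 : ∑ y, q y = 1)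
    (hσ : Function.Injective σ) (y : α) :
    sharingWeight σ q y * (1 - massAbove σ q y) = 1 - massAbove σ q y - q y := by
  unfold sharingWeight
  split_ifs with h
  · rcases h with h | h
    · rw [one_sub_massAbove_of_forall_le hσ hq1 (fun y' => h ▸ Nat.zero_le _)]
      ring
    · have := le_one_sub_massAbove (σ := σ) hq0 hq1 y
      have := hq0 y
      rw [h]
      linarith
  · field_simp [(not_or.mp h).2]

theorem prod_sharingWeight (hq0 : ∀ y, 0 ≤ q y) (hq1 : ∑ y, q y = 1)
    (hσ : Function.Injective σ) (y : α) :
    ∏ y' ∈ univ.filter (fun y' => σ y < σ y'), sharingWeight σ q y' = 1 - massAbove σ q y :=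
  prod_eq_one_sub_sum_of_upperSet hσ (sharingWeight_mul_one_sub_massAbove hq0 hq1 hσ) _
    fun _ ha _ hab => by simp_all [(mem_filter.mp ha).2.trans hab]

end

theorem sharing_steps_representation_general (n : ℕ) (q : (Fin n → Bool) → ℝ)
    (hq0 : ∀ y, 0 ≤ q y) (hq1 : ∑ y, q y = 1)
    (σ : (Fin n → Bool) → ℕ) (hσinj : Function.Injective σ) :
    let denom : (Fin n → Bool) → ℝ := fun yt =>
      1 - ∑ y' ∈ Finset.univ.filter (fun y' => σ yt < σ y'), q y'
    let lam : (Fin n → Bool) → ℝ := fun yt =>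
      if σ yt = 0 ∨ denom yt = 0 then 0 else 1 - q yt / denom yt
    (∀ yt, 0 ≤ lam yt ∧ lam yt ≤ 1) ∧
    ∀ y, q y = ∑ yt, (∏ y' ∈ Finset.univ.filter (fun y' => σ yt < σ y'), lam y') *
        (1 - lam yt) * (if y = yt then 1 else 0) := by
  intro denom lam
  have hlam : lam = sharingWeight σ q := rfl
  refine ⟨fun yt => sharingWeight_mem_Icc hq0 hq1 yt, fun y => ?_⟩
  simp only [hlam, mul_ite, mul_one, mul_zero, sum_ite_eq, mem_univ, if_true]
  rw [prod_sharingWeight hq0 hq1 hσinj]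
  linarith [sharingWeight_mul_one_sub_massAbove hq0 hq1 hσinj y]

/-- A probability distribution `q` on `{0,1}^n` is realized by `2^n - 1` sequential probability
sharing steps: the weights `λ_y` lie in `[0,1]` and `q` equals the resulting mixture of Dirac
measures. Here `σ` is a bijection `{0,1}^n → {0,…,2^n-1}`. -/
theorem sharing_steps_representation (n : ℕ) (q : (Fin n → Bool) → ℝ)
    (hq0 : ∀ y, 0 ≤ q y) (hq1 : ∑ y, q y = 1)
    (σ : (Fin n → Bool) → ℕ) (hσinj : Function.Injective σ)
    (hσlt : ∀ y, σ y < 2 ^ n) :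
    let denom : (Fin n → Bool) → ℝ := fun yt =>
      1 - ∑ y' ∈ Finset.univ.filter (fun y' => σ yt < σ y'), q y'
    let lam : (Fin n → Bool) → ℝ := fun yt =>
      if σ yt = 0 ∨ denom yt = 0 then 0 else 1 - q yt / denom yt
    (∀ yt, 0 ≤ lam yt ∧ lam yt ≤ 1) ∧
    ∀ y, q y = ∑ yt, (∏ y' ∈ Finset.univ.filter (fun y' => σ yt < σ y'), lam y') *
        (1 - lam yt) * (if y = yt then 1 else 0) :=
  sharing_steps_representation_general n q hq0 hq1 σ hσinj
end

section
/- With K(r) defined by K(1) = 1/2 and K(r) = 2^{−r} + K(r−1)(1 − 2^{−r}(r+1)), the sequence K(r) is bounded below by a positive constant; in particular K(r) > 1/5 for all r ≥ 1. -/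
/-!
The sharper bound `K r ≥ (1 + (r + 1) / 2 ^ r) / 5` holds already at `r = 1` and is preserved by
the recursion: with `q = 2 ^ r`, the step from `r - 1` to `r` amounts to `2 r (r + 1) ≤ 3 q`.
-/

/-- `K(1) = 1/2` and `K(r) = 2^{-r} + K(r-1)(1 - (r+1)/2^r)` for `r ≥ 2`. -/
noncomputable def K : ℕ → ℝ
  | 0 => 1 / 2
  | 1 => 1 / 2
  | (n + 2) => 1 / 2 ^ (n + 2) + K (n + 1) * (1 - ((n : ℝ) + 3) / 2 ^ (n + 2))

lemma two_mul_mul_succ_le_three_mul_two_pow (r : ℕ) : 2 * r * (r + 1) ≤ 3 * 2 ^ r := by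
  rcases Nat.lt_or_ge r 2 with hr | hr
  · interval_cases r <;> norm_num
  induction r, hr using Nat.le_induction with
  | base => norm_num
  | succ r hr ih =>
    -- the left side at most doubles from `r` to `r + 1` once `r ≥ 2`
    calc 2 * (r + 1) * (r + 1 + 1) ≤ 2 * (2 * r * (r + 1)) := by nlinarith
      _ ≤ 2 * (3 * 2 ^ r) := by omega
      _ = 3 * 2 ^ (r + 1) := by ring

lemma K_succ_ge (n : ℕ) : (1 + ((n : ℝ) + 2) / 2 ^ (n + 1)) / 5 ≤ K (n + 1) := by
  induction n with
  | zero => norm_num [K]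
  | succ n ih =>
    rw [K]
    push_cast
    set q : ℝ := 2 ^ (n + 1 + 1) with hq_def
    have hq : 0 < q := by positivity
    rw [show (2 : ℝ) ^ (n + 1) = q / 2 by rw [hq_def, pow_succ]; ring] at ih
    have hfactor : 0 ≤ 1 - ((n : ℝ) + 3) / q := by
      rw [sub_nonneg, div_le_one hq, hq_def]
      exact_mod_cast (Nat.lt_two_pow_self : n + 2 < 2 ^ (n + 2))
    have hpoly : 2 * ((n : ℝ) + 2) * ((n : ℝ) + 3) ≤ 3 * q := by
      rw [hq_def]; exact_mod_cast two_mul_mul_succ_le_three_mul_two_pow (n + 2)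
    calc (1 + ((n : ℝ) + 1 + 2) / q) / 5
        ≤ 1 / q + (1 + ((n : ℝ) + 2) / (q / 2)) / 5 * (1 - ((n : ℝ) + 3) / q) := by
          have hdiff : 1 / q + (1 + ((n : ℝ) + 2) / (q / 2)) / 5 * (1 - ((n : ℝ) + 3) / q)
              - (1 + ((n : ℝ) + 1 + 2) / q) / 5
              = (3 * q - 2 * ((n : ℝ) + 2) * ((n : ℝ) + 3)) / (5 * q ^ 2) := by
            field_simp; ring
          have : 0 ≤ (3 * q - 2 * ((n : ℝ) + 2) * ((n : ℝ) + 3)) / (5 * q ^ 2) := by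
            apply div_nonneg <;> [linarith; positivity]
          linarith
      _ ≤ 1 / q + K (n + 1) * (1 - ((n : ℝ) + 3) / q) := by gcongr

/-- The sequence `K(r)` is bounded below by a positive constant: `K(r) > 1/5` for all `r ≥ 1`. -/
theorem K_gt_one_fifth : ∀ r : ℕ, 1 ≤ r → K r > 1 / 5 := by
  intro r hr
  obtain ⟨n, rfl⟩ := Nat.exists_eq_add_of_le' hr
  calc (1 : ℝ) / 5
      < (1 + ((n : ℝ) + 2) / 2 ^ (n + 1)) / 5 := by
        gcongr; exact lt_add_of_pos_right _ (by positivity)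
    _ ≤ K (n + 1) := K_succ_ge n
end

section
/- Let ϱ ≥ 0 and N ≥ 1. There exist real numbers w and b such that the function φ(x₁,...,x_N) = log(1 + exp(w(x₁+···+x_N) + b)) on {0,1}^N has leading multilinear coefficient ϱ; that is, writing φ uniquely as a multilinear polynomial φ(x) = ∑_{B ⊆ [N]} J_B ∏_{i∈B} x_i, one can achieve J_{[N]} = ϱ. -/
/-!
By Möbius inversion on the Boolean lattice, every function `g` of the subset `{i | xᵢ = 1}` is the
multilinear polynomial with coefficients `J_B = ∑_{A ⊆ B} μ(A, B) g(A)`. For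
`g(A) = log (1 + exp (w |A| + b))` the leading coefficient `∑_A μ(A, [N]) g(A)` vanishes at `w = 0`,
where `g` is constant. Along a ray `(t w₀, t b₀)` with `N w₀ + b₀ > 0` and `k w₀ + b₀ < 0` for
`k < N`, every term with `A ≠ [N]` tends to `0` while the top term tends to `∞`, so the intermediate
value theorem yields every `ρ ≥ 0`.
-/

open Finset Filter Topology IncidenceAlgebra

section MoebiusTransform

variable {α 𝕜 : Type*} [Ring 𝕜] [PartialOrder α] [OrderBot α] [LocallyFiniteOrder α]
  [DecidableEq α]

noncomputable def moebiusTransform (g : α → 𝕜) (b : α) : 𝕜 :=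
  ∑ a ∈ Iic b, mu 𝕜 a b * g a

theorem sum_Iic_moebiusTransform (g : α → 𝕜) (c : α) :
    ∑ b ∈ Iic c, moebiusTransform g b = g c := by
  simp only [moebiusTransform]
  rw [sum_comm' (t' := Iic c) (s' := fun a => Icc a c) fun b a => by
    simp only [mem_Iic, mem_Icc]
    exact ⟨fun h => ⟨⟨h.2, h.1⟩, h.2.trans h.1⟩, fun h => ⟨h.1.2, h.1.1⟩⟩]
  simp [← sum_mul, sum_Icc_mu_right]

theorem moebiusTransform_const (c : 𝕜) (b : α) :
    moebiusTransform (fun _ => c) b = if ⊥ = b then c else 0 := by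
  rw [moebiusTransform, ← sum_mul, ← Icc_bot, sum_Icc_mu_left, ite_mul, one_mul, zero_mul]

end MoebiusTransform

theorem sum_moebiusTransform_mul_prod_boole {α 𝕜 : Type*} [Fintype α] [DecidableEq α]
    [CommRing 𝕜] (g : Finset α → 𝕜) (x : α → Bool) :
    ∑ B : Finset α, moebiusTransform g B * ∏ i ∈ B, (if x i then (1 : 𝕜) else 0) =
      g {i | x i} := calc
  _ = ∑ B, if B ⊆ ({i | x i} : Finset α) then moebiusTransform g B else 0 := by
    refine sum_congr rfl fun B _ => ?_
    simp only [prod_boole, mul_boole, subset_iff, mem_filter_univ]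
    congr
  _ = ∑ B ∈ Iic ({i | x i} : Finset α), moebiusTransform g B := by
    rw [← sum_filter]; congr 1; ext; simp
  _ = g {i | x i} := sum_Iic_moebiusTransform g _

noncomputable def softplus (x : ℝ) : ℝ := Real.log (1 + Real.exp x)

theorem continuous_softplus : Continuous softplus :=
  (continuous_const.add Real.continuous_exp).log fun x => (add_pos one_pos (Real.exp_pos x)).ne'

theorem tendsto_softplus_atBot : Tendsto softplus atBot (𝓝 0) := by
  have h : Tendsto (fun x => 1 + Real.exp x) atBot (𝓝 1) := by
    simpa using Real.tendsto_exp_atBot.const_add 1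
  have hlog := (Real.continuousAt_log one_ne_zero).tendsto.comp h
  rwa [Real.log_one] at hlog

theorem tendsto_softplus_atTop : Tendsto softplus atTop atTop :=
  Real.tendsto_log_atTop.comp (tendsto_atTop_add_const_left _ 1 Real.tendsto_exp_atTop)

section SoftplusLeadingCoeff

variable (α : Type*) [Fintype α] [DecidableEq α]

noncomputable def softplusLeadingCoeff (w b : ℝ) : ℝ :=
  moebiusTransform (fun A : Finset α => softplus (w * #A + b)) univ

theorem softplusLeadingCoeff_zero_left [Nonempty α] (b : ℝ) :
    softplusLeadingCoeff α 0 b = 0 := by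
  simp only [softplusLeadingCoeff, zero_mul, zero_add]
  rw [moebiusTransform_const, bot_eq_empty, if_neg univ_nonempty.ne_empty.symm]

theorem continuous_softplusLeadingCoeff_ray (w₀ b₀ : ℝ) :
    Continuous fun t => softplusLeadingCoeff α (t * w₀) (t * b₀) :=
  continuous_finsetSum _ fun _ _ => continuous_const.mul (continuous_softplus.comp (by fun_prop))

theorem tendsto_softplusLeadingCoeff_ray {w₀ b₀ : ℝ} (hpos : 0 < Fintype.card α * w₀ + b₀)
    (hneg : ∀ k < Fintype.card α, k * w₀ + b₀ < 0) :
    Tendsto (fun t => softplusLeadingCoeff α (t * w₀) (t * b₀)) atTop atTop := by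
  have hray : ∀ t, softplusLeadingCoeff α (t * w₀) (t * b₀) =
      (∑ A ∈ (univ : Finset (Finset α)).erase univ,
          mu ℝ A univ * softplus (t * (#A * w₀ + b₀))) +
        softplus (t * (Fintype.card α * w₀ + b₀)) := by
    intro t
    rw [softplusLeadingCoeff, moebiusTransform, Iic_eq_powerset, powerset_univ,
      ← sum_erase_add _ _ (mem_univ univ)]
    simp only [mu_self, one_mul, card_univ]
    ring_nf
  refine Tendsto.congr (fun t => (hray t).symm) (Tendsto.add_atTop (C := 0) ?_ ?_)
  · simpa using tendsto_finsetSum (univ.erase univ) fun A hA =>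
      (tendsto_softplus_atBot.comp (tendsto_id.atTop_mul_const_of_neg
        (hneg _ ((card_lt_iff_ne_univ A).mpr (ne_of_mem_erase hA))))).const_mul (mu ℝ A univ)
  · exact tendsto_softplus_atTop.comp (tendsto_id.atTop_mul_const hpos)

theorem exists_softplusLeadingCoeff_eq [Nonempty α] {ρ : ℝ} (hρ : 0 ≤ ρ) :
    ∃ w b, softplusLeadingCoeff α w b = ρ := by
  -- `b₀ = 1/2 - |α|` puts the sign change of `k ↦ k + b₀` between `|α| - 1` and `|α|`.
  set f := fun t : ℝ => softplusLeadingCoeff α (t * 1) (t * (1 / 2 - Fintype.card α))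
  have htop : Tendsto f atTop atTop :=
    tendsto_softplusLeadingCoeff_ray α (by linarith) fun k hk => by
      have : (k : ℝ) + 1 ≤ Fintype.card α := by exact_mod_cast hk
      linarith
  have hf0 : f 0 = 0 := by simp only [f, zero_mul, softplusLeadingCoeff_zero_left]
  have hρ' : ρ ∈ Set.Ici (f 0) := by rwa [Set.mem_Ici, hf0]
  obtain ⟨t, -, ht⟩ :=
    intermediate_value_Ici (continuous_softplusLeadingCoeff_ray α _ _).continuousOn htop hρ'
  exact ⟨_, _, ht⟩

end SoftplusLeadingCoeff

/-- For any `ϱ ≥ 0` there are `w, b ∈ ℝ` such that the function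
`φ(x) = log(1 + exp(w(x₁ + ⋯ + x_N) + b))` on `{0,1}^N` has a multilinear polynomial
representation whose leading coefficient `J_{[N]}` equals `ϱ`. -/
theorem leading_multilinear_coefficient (N : ℕ) (hN : 1 ≤ N) (ρ : ℝ) (hρ : 0 ≤ ρ) :
    ∃ (w b : ℝ) (J : Finset (Fin N) → ℝ),
      J Finset.univ = ρ ∧
      ∀ x : Fin N → Bool,
        Real.log (1 + Real.exp (w * (∑ i, if x i then (1 : ℝ) else 0) + b))
          = ∑ B : Finset (Fin N), J B * ∏ i ∈ B, (if x i then (1 : ℝ) else 0) := by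
  have : Nonempty (Fin N) := ⟨⟨0, hN⟩⟩
  obtain ⟨w, b, hJ⟩ := exists_softplusLeadingCoeff_eq (Fin N) hρ
  refine ⟨w, b, moebiusTransform fun A => softplus (w * #A + b), hJ, fun x => ?_⟩
  rw [sum_moebiusTransform_mul_prod_boole, sum_boole]
  rfl
end
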